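/- Let X* be one half times the 9×9 real symmetric matrix whose upper-triangular entries (rows and columns indexed 1–9) are: row 1: (1, −1, −1, 0, −1, 1, 1, 0, 0); row 2 (from the diagonal): (4, 1, 0, 1, −4, −4, 0, 3); row 3: (1, 0, 1, −1, −1, 0, 0); row 4: (0, 0, 0, 0, 0, 0); row 5: (1, −1, −1, 0, 0); row 6: (4, 4, 0, −3); row 7: (4, 0, −3); row 8: (0, 0); row 9: (3). Then for all real numbers μ, a01, b01, c001, the trace inner product of M1s(μ, a01, b01, c001) with X* equals −μ, i.e. Tr(M1s(μ, a01, b01, c001) · X*) = −μ. -/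
import Mathlib


noncomputable def M1s (μ a01 b01 c001 : ℝ) : Matrix (Fin 9) (Fin 9) ℝ :=
  !![1, 1/2, (4-μ)/6, 1/2, 1/2, (μ+2)/6, (μ+2)/6, 1/2, (1-μ)/6;
     1/2, 1/2, a01, (μ+2)/6, (μ+2)/6, (μ+2)/6, (μ+2)/6, (μ+2)/6, a01-(1-μ)/6;
     (4-μ)/6, a01, (4-μ)/6, 1/2, (1-μ)/6, (μ+2)/6, a01-(1-μ)/6, 1/2, (1-μ)/6;
     1/2, (μ+2)/6, 1/2, 1/2, b01, (μ+2)/6, c001, 1/2, b01;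
     1/2, (μ+2)/6, (1-μ)/6, b01, 1/2, c001, (μ+2)/6, b01, (1-μ)/6;
     (μ+2)/6, (μ+2)/6, (μ+2)/6, (μ+2)/6, c001, (μ+2)/6, c001, (μ+2)/6, c001;
     (μ+2)/6, (μ+2)/6, a01-(1-μ)/6, c001, (μ+2)/6, c001, (μ+2)/6, c001, a01-(1-μ)/6;
     1/2, (μ+2)/6, 1/2, 1/2, b01, (μ+2)/6, c001, 1/2, b01;
     (1-μ)/6, a01-(1-μ)/6, (1-μ)/6, b01, (1-μ)/6, c001, a01-(1-μ)/6, b01, (1-μ)/6]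

noncomputable def Xstar : Matrix (Fin 9) (Fin 9) ℝ :=
  (1/2 : ℝ) •
  !![1, -1, -1, 0, -1, 1, 1, 0, 0;
     -1, 4, 1, 0, 1, -4, -4, 0, 3;
     -1, 1, 1, 0, 1, -1, -1, 0, 0;
     0, 0, 0, 0, 0, 0, 0, 0, 0;
     -1, 1, 1, 0, 1, -1, -1, 0, 0;
     1, -4, -1, 0, -1, 4, 4, 0, -3;
     1, -4, -1, 0, -1, 4, 4, 0, -3;
     0, 0, 0, 0, 0, 0, 0, 0, 0;
     0, 3, 0, 0, 0, -3, -3, 0, 3]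

theorem stmt5 (μ a01 b01 c001 : ℝ) :
    (M1s μ a01 b01 c001 * Xstar).trace = -μ := by
  simp only [M1s, Xstar, Matrix.trace, Matrix.diag, Matrix.mul_apply, Matrix.smul_apply,
    Fin.sum_univ_succ, Fin.sum_univ_zero, Matrix.cons_val', Matrix.cons_val_zero, Matrix.cons_val_one,
    Matrix.head_cons, Matrix.empty_val', Matrix.cons_val_fin_one, Matrix.head_fin_const,
    Matrix.of_apply, Matrix.cons_val_succ, smul_eq_mul]
  ring
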